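/- Under the standing assumptions and Assumption 2, suppose φ is σ-strongly convex with respect to a norm ‖·‖. Let (x_{k+1}, x_{k+1}*) be obtained from (x_k, x_k*) by one step with index i_k (with f_{i_k}(x_k) ≠ 0, ∇f_{i_k}(x_k) ≠ 0) using either the exact Bregman-projection step size t_{k,φ} or the relaxed step size t_{k,σ} = σ f_{i_k}(x_k)/‖∇f_{i_k}(x_k)‖_*². Then for every solution x̂ ∈ S: D_φ^{x_{k+1}*}(x_{k+1}, x̂) ≤ D_φ^{x_k*}(x_k, x̂) − (σ/2) · f_{i_k}(x_k)² / ‖∇f_{i_k}(x_k)‖_*². -/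

import Mathlib

open Set Filter Topology MeasureTheory ProbabilityTheory

noncomputable section

abbrev Euc (d : ℕ) := EuclideanSpace ℝ (Fin d)

/-- Real inner product on `ℝ^d`. -/
def rinn {d : ℕ} (x y : Euc d) : ℝ := inner ℝ x y

/-- Effective domain of an extended-real-valued function. -/
def edom {d : ℕ} (φ : Euc d → EReal) : Set (Euc d) := {x | φ x ≠ ⊤}

/-- Convex subdifferential. -/
def subdiff {d : ℕ} (φ : Euc d → EReal) (x : Euc d) : Set (Euc d) :=
  {u | φ x ≠ ⊤ ∧ ∀ y : Euc d, φ x + ((rinn u (y - x) : ℝ) : EReal) ≤ φ y}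

/-- Domain of the subdifferential. -/
def ddom {d : ℕ} (φ : Euc d → EReal) : Set (Euc d) := {x | (subdiff φ x).Nonempty}

/-- Bregman distance `D_φ^{u}(x,y) = φ(y) - φ(x) - ⟨u, y - x⟩`. -/
def breg {d : ℕ} (φ : Euc d → EReal) (u x y : Euc d) : EReal :=
  φ y - φ x - ((rinn u (y - x) : ℝ) : EReal)

/-- Fenchel conjugate (extended-real-valued). -/
def econj {d : ℕ} (φ : Euc d → EReal) (u : Euc d) : EReal :=
  ⨆ x : Euc d, ((rinn u x : ℝ) : EReal) - φ x

/-- Real-valued Fenchel conjugate (under the standing assumptions `econj` is finite). -/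
def rconj {d : ℕ} (φ : Euc d → EReal) (u : Euc d) : ℝ := (econj φ u).toReal

/-- Gradient `∇φ*` of the conjugate. -/
def gradconj {d : ℕ} (φ : Euc d → EReal) (u : Euc d) : Euc d := gradient (rconj φ) u

def ConvexE {d : ℕ} (φ : Euc d → EReal) : Prop :=
  ∀ x y : Euc d, ∀ t : ℝ, 0 < t → t < 1 →
    φ (t • x + (1 - t) • y) ≤ (t : EReal) * φ x + ((1 - t : ℝ) : EReal) * φ y

def StrictConvexOnE {d : ℕ} (φ : Euc d → EReal) (s : Set (Euc d)) : Prop :=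
  ∀ x ∈ s, ∀ y ∈ s, x ≠ y → ∀ t : ℝ, 0 < t → t < 1 →
    φ (t • x + (1 - t) • y) < (t : EReal) * φ x + ((1 - t : ℝ) : EReal) * φ y

def ProperE {d : ℕ} (φ : Euc d → EReal) : Prop :=
  (∃ x, φ x ≠ ⊤) ∧ ∀ x, φ x ≠ ⊥

/-- `φ(x)/‖x‖ → ∞` as `‖x‖ → ∞`. -/
def Supercoercive {d : ℕ} (φ : Euc d → EReal) : Prop :=
  ∀ M : ℝ, ∃ R : ℝ, ∀ x : Euc d, R ≤ ‖x‖ → ((M * ‖x‖ : ℝ) : EReal) ≤ φ x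

/-- Essential strict convexity: strict convexity on the relative interior of the domain. -/
def EssStrictConvexE {d : ℕ} (φ : Euc d → EReal) : Prop :=
  StrictConvexOnE φ (intrinsicInterior ℝ (edom φ))

/-- Standing assumptions on the distance generating function `φ` and constraint set `C`. -/
structure PhiAssump {d : ℕ} (φ : Euc d → EReal) (C : Set (Euc d)) : Prop where
  Cne : C.Nonempty
  Cconv : Convex ℝ C
  Ccl : IsClosed C
  proper : ProperE φ
  conv : ConvexE φ
  lsc : LowerSemicontinuous φ
  coercive : Supercoercive φ
  essstrict : EssStrictConvexE φ
  domC : closure (ddom φ) = C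
  ri_eq : ddom φ = intrinsicInterior ℝ (edom φ)

/-- Standing assumption (iv): Bregman distances tend to zero along convergent sequences. -/
def BregCont {d : ℕ} (φ : Euc d → EReal) : Prop :=
  ∀ x ∈ edom φ, ∀ xk : ℕ → Euc d, ∀ uk : ℕ → Euc d,
    (∀ k, uk k ∈ subdiff φ (xk k)) → Tendsto xk atTop (𝓝 x) →
    Tendsto (fun k => breg φ (uk k) (xk k) x) atTop (𝓝 (0 : EReal))

/-- `f` is continuously differentiable on `Dset ⊇ C`, with gradients `f'`. -/
structure FAssump {d n : ℕ} (f : Fin n → Euc d → ℝ) (f' : Fin n → Euc d → Euc d)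
    (Dset C : Set (Euc d)) : Prop where
  CsubD : C ⊆ Dset
  grad : ∀ i, ∀ x ∈ Dset, HasGradientAt (f i) (f' i x) x
  cont : ∀ i, ContinuousOn (f' i) Dset

/-- Solution set `S = C ∩ f⁻¹(0)`. -/
def solSet {d n : ℕ} (f : Fin n → Euc d → ℝ) (C : Set (Euc d)) : Set (Euc d) :=
  {x ∈ C | ∀ i, f i x = 0}

/-- `N` is a norm on `ℝ^d`. -/
def IsANorm {d : ℕ} (N : Euc d → ℝ) : Prop :=
  (∀ x, N x = 0 ↔ x = 0) ∧ (∀ (c : ℝ) (x : Euc d), N (c • x) = |c| * N x) ∧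
    ∀ x y : Euc d, N (x + y) ≤ N x + N y

/-- Dual norm of `N`. -/
def dualN {d : ℕ} (N : Euc d → ℝ) (u : Euc d) : ℝ :=
  sSup {r : ℝ | ∃ y : Euc d, N y ≤ 1 ∧ r = (rinn u y)}

/-- `φ` is `σ`-strongly convex w.r.t. the norm `N`. -/
def StronglyConvexWrt {d : ℕ} (φ : Euc d → EReal) (σ : ℝ) (N : Euc d → ℝ) : Prop :=
  ∀ x ∈ ddom φ, ∀ y ∈ ddom φ, ∀ u ∈ subdiff φ x,
    ((σ / 2 * (N (x - y)) ^ 2 : ℝ) : EReal) ≤ breg φ u x y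

/-- `φ` is `M`-smooth w.r.t. the norm `N`: finite everywhere (subdifferentiable everywhere)
with the quadratic upper bound. -/
def SmoothWrt {d : ℕ} (φ : Euc d → EReal) (M : ℝ) (N : Euc d → ℝ) : Prop :=
  (∀ x : Euc d, (subdiff φ x).Nonempty) ∧
    ∀ x y : Euc d, ∀ u ∈ subdiff φ x,
      breg φ u x y ≤ ((M / 2 * (N (x - y)) ^ 2 : ℝ) : EReal)

/-- `g` (with gradient `g'`) is star-convex. -/
def StarConvexWith {d : ℕ} (g : Euc d → ℝ) (g' : Euc d → Euc d) : Prop :=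
  (∃ z : Euc d, ∀ y, g z ≤ g y) ∧
    ∀ x z : Euc d, (∀ y, g z ≤ g y) → g x + rinn (g' x) (z - x) ≤ g z

/-- `g` (with gradient `g'`) is strictly star-convex. -/
def StrictStarConvexWith {d : ℕ} (g : Euc d → ℝ) (g' : Euc d → Euc d) : Prop :=
  (∃ z : Euc d, ∀ y, g z ≤ g y) ∧
    ∀ x z : Euc d, (∀ y, g z ≤ g y) → x ≠ z → g x + rinn (g' x) (z - x) < g z

/-- `g` is `μ`-strongly star-convex relative to `φ`. -/
def StronglyStarConvexRel {d : ℕ} (g : Euc d → ℝ) (g' : Euc d → Euc d) (μ : ℝ)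
    (φ : Euc d → EReal) : Prop :=
  (∃ z : Euc d, ∀ y, g z ≤ g y) ∧
    ∀ x : Euc d, ∀ u ∈ subdiff φ x, ∀ z : Euc d, (∀ y, g z ≤ g y) →
      ((g x + rinn (g' x) (z - x) : ℝ) : EReal) + (μ : EReal) * breg φ u x z ≤ (g z : EReal)

def IsAffineF {d : ℕ} (g : Euc d → ℝ) : Prop :=
  ∃ (a : Euc d) (b : ℝ), ∀ x, g x = (rinn a x) + b

/-- Assumption 2: each component is either nonnegative star-convex with a zero in `dom ∂φ`,
nonnegative strictly star-convex, or affine. -/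
def Assump2 {d n : ℕ} (φ : Euc d → EReal) (f : Fin n → Euc d → ℝ)
    (f' : Fin n → Euc d → Euc d) : Prop :=
  ∀ i : Fin n,
    ((∀ x, 0 ≤ f i x) ∧ StarConvexWith (f i) (f' i) ∧ ∃ z ∈ ddom φ, f i z = 0) ∨
    ((∀ x, 0 ≤ f i x) ∧ StrictStarConvexWith (f i) (f' i)) ∨
    IsAffineF (f i)

/-- `g` is `L`-smooth w.r.t. the norm `N` (quadratic upper bound). -/
def LSmoothWrt {d : ℕ} (g : Euc d → ℝ) (g' : Euc d → Euc d) (L : ℝ) (N : Euc d → ℝ) : Prop :=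
  ∀ x y : Euc d, g y ≤ g x + rinn (g' x) (y - x) + L / 2 * (N (x - y)) ^ 2

/-- Hyperplane given by the linearization of `f i` at `x`. -/
def linHyp {d n : ℕ} (f : Fin n → Euc d → ℝ) (f' : Fin n → Euc d → Euc d)
    (i : Fin n) (x : Euc d) : Set (Euc d) :=
  {y | f i x + rinn (f' i x) (y - x) = 0}

/-- Objective of the one-dimensional dual problem defining the exact NBK step size. -/
def lineObj {d n : ℕ} (φ : Euc d → EReal) (f : Fin n → Euc d → ℝ)
    (f' : Fin n → Euc d → Euc d) (i : Fin n) (x u : Euc d) (t : ℝ) : ℝ :=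
  rconj φ (u - t • f' i x) + t * (rinn (f' i x) x - f i x)

/-- Local tangential cone condition with constant `η` on `U`. -/
def TCCOn {d : ℕ} (g : Euc d → ℝ) (g' : Euc d → Euc d) (η : ℝ) (U : Set (Euc d)) : Prop :=
  ∀ x ∈ U, ∀ y ∈ U, |g x + rinn (g' x) (y - x) - g y| ≤ η * |g x - g y|

/-- The set `B_{r,φ}(z)`. -/
def BregBall {d : ℕ} (φ : Euc d → EReal) (C : Set (Euc d)) (r : ℝ) (z : Euc d) :
    Set (Euc d) :=
  {x ∈ C | ∀ u ∈ subdiff φ x, breg φ u x z ≤ (r : EReal)}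

end

/-!
For `u ∈ ∂φ(x)` the Bregman distance to `z` is `φ(z) - ⟨u, z⟩ + φ*(u)`, so one step changes it by
`ψ(t) - φ*(u) + t (f(x) + ⟨∇f(x), z - x⟩)`, where `ψ` is the one-dimensional dual objective.
Strong convexity of `φ` gives the quadratic upper bound `φ*(u + v) ≤ φ*(u) + ⟨v, x⟩ + D² / (2σ)`
whenever `⟨v, ·⟩ ≤ D N(·)`; it makes `φ*` differentiable with `∇φ*(u) = x`, and it yields
`ψ(t) ≤ φ*(u) - σ f(x)² / (2 ‖∇f(x)‖_*²)` both for the minimizer of `ψ` and for the relaxed step.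
Finally, Assumption 2 forces the linearization `f(x) + ⟨∇f(x), z - x⟩` at a solution `z` to have
sign opposite to `f(x)`, while `t f(x) ≥ 0` for both step sizes.
-/

namespace IsANorm

variable {d : ℕ} {N : Euc d → ℝ}

def toSeminorm (hN : IsANorm N) : Seminorm ℝ (Euc d) :=
  Seminorm.of N hN.2.2 fun c x => by rw [hN.2.1, Real.norm_eq_abs]

variable (hN : IsANorm N)
include hN

lemma nonneg (x : Euc d) : 0 ≤ N x := apply_nonneg hN.toSeminorm x

lemma map_neg (x : Euc d) : N (-x) = N x := map_neg_eq_map hN.toSeminorm x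

lemma map_sub_rev (x y : Euc d) : N (x - y) = N (y - x) := _root_.map_sub_rev hN.toSeminorm x y

lemma pos {x : Euc d} (hx : x ≠ 0) : 0 < N x :=
  (hN.nonneg x).lt_of_ne fun h => hx ((hN.1 x).1 h.symm)

lemma continuous : Continuous N :=
  continuousOn_univ.1 (hN.toSeminorm.convexOn.continuousOn isOpen_univ)

lemma exists_pos_mul_norm_le : ∃ m > 0, ∀ x : Euc d, m * ‖x‖ ≤ N x := by
  rcases subsingleton_or_nontrivial (Euc d) with hsub | hnt
  · exact ⟨1, one_pos, fun x => by simpa [Subsingleton.elim x 0] using hN.nonneg 0⟩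
  obtain ⟨z, hz, hmin⟩ := (isCompact_sphere (0 : Euc d) 1).exists_isMinOn
    ((NormedSpace.sphere_nonempty).2 zero_le_one) hN.continuous.continuousOn
  have hz1 : ‖z‖ = 1 := by simpa using hz
  refine ⟨N z, hN.pos (norm_ne_zero_iff.1 (by simp [hz1])), fun x => ?_⟩
  rcases eq_or_ne x 0 with rfl | hx
  · simpa using hN.nonneg 0
  have hxpos : 0 < ‖x‖ := norm_pos_iff.2 hx
  have hsph : ‖x‖⁻¹ • x ∈ Metric.sphere (0 : Euc d) 1 := by
    simp [norm_smul, hxpos.ne']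
  have := hmin hsph
  rw [Set.mem_ofPred_eq, hN.2.1, abs_of_pos (inv_pos.2 hxpos), inv_mul_eq_div,
    le_div_iff₀ hxpos] at this
  exact this

lemma exists_inner_le_mul : ∃ c ≥ 0, ∀ u y : Euc d, rinn u y ≤ c * ‖u‖ * N y := by
  obtain ⟨m, hm, hmN⟩ := hN.exists_pos_mul_norm_le
  refine ⟨m⁻¹, inv_nonneg.2 hm.le, fun u y => ?_⟩
  calc rinn u y ≤ ‖u‖ * ‖y‖ := real_inner_le_norm u y
    _ ≤ ‖u‖ * (m⁻¹ * N y) := by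
        gcongr
        rw [← div_eq_inv_mul, le_div_iff₀' hm]
        exact hmN y
    _ = m⁻¹ * ‖u‖ * N y := by ring

lemma bddAbove_dual (u : Euc d) :
    BddAbove {r : ℝ | ∃ y : Euc d, N y ≤ 1 ∧ r = rinn u y} := by
  obtain ⟨c, hc, hcN⟩ := hN.exists_inner_le_mul
  refine ⟨c * ‖u‖, ?_⟩
  rintro _ ⟨y, hy, rfl⟩
  calc rinn u y ≤ c * ‖u‖ * N y := hcN u y
    _ ≤ c * ‖u‖ := mul_le_of_le_one_right (by positivity) hy

lemma inner_le_dualN_mul (u y : Euc d) : rinn u y ≤ dualN N u * N y := by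
  rcases eq_or_ne y 0 with rfl | hy
  · have h0 : N 0 = 0 := (hN.1 0).2 rfl
    simp [rinn, h0]
  have hNy := hN.pos hy
  have hball : rinn u ((N y)⁻¹ • y) ≤ dualN N u := by
    refine le_csSup (hN.bddAbove_dual u) ⟨(N y)⁻¹ • y, ?_, rfl⟩
    rw [hN.2.1, abs_of_pos (inv_pos.2 hNy), inv_mul_cancel₀ hNy.ne']
  rwa [rinn, real_inner_smul_right, inv_mul_le_iff₀ hNy, mul_comm] at hball

lemma abs_inner_le_dualN_mul (u y : Euc d) : |rinn u y| ≤ dualN N u * N y := by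
  refine abs_le'.2 ⟨hN.inner_le_dualN_mul u y, ?_⟩
  have := hN.inner_le_dualN_mul u (-y)
  rwa [rinn, inner_neg_right, hN.map_neg] at this

lemma dualN_pos {u : Euc d} (hu : u ≠ 0) : 0 < dualN N u := by
  have hinner : 0 < rinn u u := real_inner_self_pos.2 hu
  exact pos_of_mul_pos_left (hinner.trans_le (hN.inner_le_dualN_mul u u)) (hN.nonneg u)

end IsANorm

section Conjugate

variable {d : ℕ} {φ : Euc d → EReal}

lemma ProperE.coe_toReal (hp : ProperE φ) {x : Euc d} (hx : φ x ≠ ⊤) :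
    ((φ x).toReal : EReal) = φ x :=
  EReal.coe_toReal hx (hp.2 x)

lemma ProperE.toReal_add_inner_le (hp : ProperE φ) {u x y : Euc d} (hu : u ∈ subdiff φ x)
    (hy : φ y ≠ ⊤) : (φ x).toReal + rinn u (y - x) ≤ (φ y).toReal := by
  have := hu.2 y
  rw [← hp.coe_toReal hu.1, ← hp.coe_toReal hy] at this
  exact_mod_cast this

lemma mem_subdiff_of_forall_le (hp : ProperE φ) {v x : Euc d} (hx : φ x ≠ ⊤)
    (hmin : ∀ y, φ x - ((rinn v x : ℝ) : EReal) ≤ φ y - ((rinn v y : ℝ) : EReal)) :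
    v ∈ subdiff φ x := by
  refine ⟨hx, fun y => ?_⟩
  rcases eq_or_ne (φ y) ⊤ with hy | hy
  · simp [hy]
  have := hmin y
  rw [← hp.coe_toReal hx, ← hp.coe_toReal hy] at this ⊢
  have hsub : rinn v (y - x) = rinn v y - rinn v x := inner_sub_right v y x
  norm_cast at this ⊢
  linarith

lemma lowerSemicontinuous_sub_inner (hl : LowerSemicontinuous φ) (v : Euc d) :
    LowerSemicontinuous fun y => φ y - ((rinn v y : ℝ) : EReal) := by
  have hlin : Continuous fun y : Euc d => ((-rinn v y : ℝ) : EReal) :=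
    continuous_coe_real_ereal.comp (continuous_const.inner continuous_id).neg
  simpa only [sub_eq_add_neg, ← EReal.coe_neg] using
    hl.add' hlin.lowerSemicontinuous fun y =>
      EReal.continuousAt_add (Or.inr (EReal.coe_ne_bot _)) (Or.inr (EReal.coe_ne_top _))

/-- Supercoercivity makes `φ - ⟨v, ·⟩` exceed its value at any finite point outside a ball, so it
attains its minimum, and a minimizer has `v` as a subgradient. -/
lemma exists_mem_subdiff (hp : ProperE φ) (hl : LowerSemicontinuous φ)
    (hc : Supercoercive φ) (v : Euc d) : ∃ x, v ∈ subdiff φ x := by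
  set g : Euc d → EReal := fun y => φ y - ((rinn v y : ℝ) : EReal)
  obtain ⟨x₀, hx₀⟩ := hp.1
  set r₀ : ℝ := (φ x₀).toReal - rinn v x₀
  have hgx₀ : g x₀ = r₀ := by simp [g, r₀, hp.coe_toReal hx₀]
  obtain ⟨R, hR⟩ := hc (‖v‖ + |r₀| + 1)
  set ρ : ℝ := max R (max 1 ‖x₀‖)
  have hout : ∀ y, ρ < ‖y‖ → g x₀ < g y := by
    intro y hy
    have hRy : R ≤ ‖y‖ := (le_max_left _ _).trans hy.le
    have h1y : 1 ≤ ‖y‖ := ((le_max_left _ _).trans (le_max_right _ _)).trans hy.le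
    have hvy : rinn v y ≤ ‖v‖ * ‖y‖ := real_inner_le_norm v y
    have hreal : r₀ < (‖v‖ + |r₀| + 1) * ‖y‖ - rinn v y := by
      nlinarith [le_abs_self r₀, abs_nonneg r₀]
    calc g x₀ = r₀ := hgx₀
      _ < (((‖v‖ + |r₀| + 1) * ‖y‖ - rinn v y : ℝ) : EReal) := EReal.coe_lt_coe_iff.2 hreal
      _ ≤ g y := by rw [EReal.coe_sub]; exact EReal.sub_le_sub (hR y hRy) le_rfl
  have hx₀ball : x₀ ∈ Metric.closedBall (0 : Euc d) ρ := by
    simp [ρ]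
  obtain ⟨x, hxball, hxmin⟩ :=
    ((lowerSemicontinuous_sub_inner hl v).lowerSemicontinuousOn _).exists_isMinOn
      ⟨x₀, hx₀ball⟩ (isCompact_closedBall 0 ρ)
  have hmin : ∀ y, g x ≤ g y := by
    intro y
    by_cases hy : y ∈ Metric.closedBall (0 : Euc d) ρ
    · exact hxmin hy
    · refine (hxmin hx₀ball).trans (hout y ?_).le
      simpa using hy
  have hx : φ x ≠ ⊤ := by
    intro htop
    have := (hmin x₀).trans_lt (hgx₀ ▸ EReal.coe_lt_top r₀)
    simp [g, htop] at this
  exact ⟨x, mem_subdiff_of_forall_le hp hx hmin⟩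

lemma econj_eq_of_mem_subdiff (hp : ProperE φ) {u x : Euc d} (hu : u ∈ subdiff φ x) :
    econj φ u = ((rinn u x : ℝ) : EReal) - φ x := by
  refine le_antisymm (iSup_le fun y => ?_) (le_iSup (fun y => ((rinn u y : ℝ) : EReal) - φ y) x)
  rcases eq_or_ne (φ y) ⊤ with hy | hy
  · simp [hy]
  have := hp.toReal_add_inner_le hu hy
  have hsub : rinn u (y - x) = rinn u y - rinn u x := inner_sub_right u y x
  rw [← hp.coe_toReal hu.1, ← hp.coe_toReal hy]
  norm_cast
  linarith

lemma rconj_eq_of_mem_subdiff (hp : ProperE φ) {u x : Euc d} (hu : u ∈ subdiff φ x) :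
    rconj φ u = rinn u x - (φ x).toReal := by
  rw [rconj, econj_eq_of_mem_subdiff hp hu, ← hp.coe_toReal hu.1, ← EReal.coe_sub,
    EReal.toReal_coe, EReal.toReal_coe]

lemma breg_eq_of_mem_subdiff (hp : ProperE φ) {u x z : Euc d} (hu : u ∈ subdiff φ x)
    (hz : φ z ≠ ⊤) : breg φ u x z = (((φ z).toReal - rinn u z + rconj φ u : ℝ) : EReal) := by
  have hsub : rinn u (z - x) = rinn u z - rinn u x := inner_sub_right u z x
  rw [breg, rconj_eq_of_mem_subdiff hp hu, ← hp.coe_toReal hu.1, ← hp.coe_toReal hz, hsub]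
  simp only [EReal.toReal_coe]
  norm_cast
  ring

lemma breg_eq_top (hp : ProperE φ) {u x z : Euc d} (hx : φ x ≠ ⊤) (hz : φ z = ⊤) :
    breg φ u x z = ⊤ := by
  rw [breg, hz, ← hp.coe_toReal hx, EReal.top_sub_coe, EReal.top_sub_coe]

variable (hp : ProperE φ) (hex : ∀ v, ∃ x, v ∈ subdiff φ x)
include hp hex

lemma inner_sub_le_rconj (v : Euc d) {y : Euc d} (hy : φ y ≠ ⊤) :
    rinn v y - (φ y).toReal ≤ rconj φ v := by
  obtain ⟨x, hx⟩ := hex v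
  have := hp.toReal_add_inner_le hx hy
  have hsub : rinn v (y - x) = rinn v y - rinn v x := inner_sub_right v y x
  rw [rconj_eq_of_mem_subdiff hp hx]
  linarith

lemma rconj_add_inner_le {u x : Euc d} (hu : u ∈ subdiff φ x) (v : Euc d) :
    rconj φ u + rinn v x ≤ rconj φ (u + v) := by
  have := inner_sub_le_rconj hp hex (u + v) hu.1
  have hadd : rinn (u + v) x = rinn u x + rinn v x := inner_add_left u v x
  rw [rconj_eq_of_mem_subdiff hp hu]
  linarith

/-- Evaluating the strong convexity of `φ` at a subgradient point `y` of `u + v`, then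
`D a - σ a² / 2 ≤ D² / (2σ)`. -/
lemma rconj_add_le {N : Euc d → ℝ} (hN : IsANorm N) {σ : ℝ} (hσ : 0 < σ)
    (hsc : StronglyConvexWrt φ σ N) {u x : Euc d} (hu : u ∈ subdiff φ x) {v : Euc d} {D : ℝ}
    (hD : ∀ y, rinn v y ≤ D * N y) :
    rconj φ (u + v) ≤ rconj φ u + rinn v x + D ^ 2 / (2 * σ) := by
  obtain ⟨y, hy⟩ := hex (u + v)
  have hstrong := hsc x ⟨u, hu⟩ y ⟨u + v, hy⟩ u hu
  rw [breg_eq_of_mem_subdiff hp hu hy.1, EReal.coe_le_coe_iff, hN.map_sub_rev] at hstrong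
  have hamgm : D * N (y - x) - σ / 2 * N (y - x) ^ 2 ≤ D ^ 2 / (2 * σ) := by
    rw [le_div_iff₀ (by positivity)]
    nlinarith [sq_nonneg (D - σ * N (y - x))]
  have hDyx := hD (y - x)
  have hsub : rinn v (y - x) = rinn v y - rinn v x := inner_sub_right v y x
  have hadd : rinn (u + v) y = rinn u y + rinn v y := inner_add_left u v y
  rw [rconj_eq_of_mem_subdiff hp hy]
  linarith

lemma hasGradientAt_rconj {N : Euc d → ℝ} (hN : IsANorm N) {σ : ℝ} (hσ : 0 < σ)
    (hsc : StronglyConvexWrt φ σ N) {u x : Euc d} (hu : u ∈ subdiff φ x) :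
    HasGradientAt (rconj φ) x u := by
  obtain ⟨c, -, hc⟩ := hN.exists_inner_le_mul
  rw [hasGradientAt_iff_isLittleO]
  refine (Asymptotics.IsBigO.of_bound (c ^ 2 / (2 * σ)) (Eventually.of_forall fun w => ?_))
    |>.trans_isLittleO (Asymptotics.isLittleO_pow_sub_sub u one_lt_two)
  have hlow := rconj_add_inner_le hp hex hu (w - u)
  have hup := rconj_add_le hp hex hN hσ hsc hu (D := c * ‖w - u‖) (hc (w - u))
  rw [add_sub_cancel] at hlow hup
  have hcomm : inner ℝ x (w - u) = rinn (w - u) x := real_inner_comm _ _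
  rw [Real.norm_eq_abs, norm_pow, norm_norm, hcomm, abs_of_nonneg (by linarith)]
  calc rconj φ w - rconj φ u - rinn (w - u) x ≤ (c * ‖w - u‖) ^ 2 / (2 * σ) := by linarith
    _ = c ^ 2 / (2 * σ) * ‖w - u‖ ^ 2 := by ring

end Conjugate

/-- The estimate shared by the exact and the relaxed step: `σ F / c` minimizes the quadratic
majorant of `ψ`, and a minimizer of `ψ` has `ψ t ≤ ψ 0 ≤ a ≤ ψ t + t F`. -/
lemma step_le_of_quadratic_bounds {ψ : ℝ → ℝ} {a F σ c t : ℝ} (hσ : 0 < σ) (hc : 0 < c)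
    (hup : ∀ s, ψ s ≤ a - s * F + s ^ 2 * c / (2 * σ)) (hlow : a - t * F ≤ ψ t)
    (ht : (∀ s, ψ t ≤ ψ s) ∨ t = σ * F / c) :
    ψ t ≤ a - σ / 2 * F ^ 2 / c ∧ 0 ≤ t * F := by
  have hmajorant :
      a - σ * F / c * F + (σ * F / c) ^ 2 * c / (2 * σ) = a - σ / 2 * F ^ 2 / c := by
    field_simp
    ring
  rcases ht with hmin | rfl
  · have h0 : ψ 0 ≤ a := by simpa using hup 0
    exact ⟨(hmin _).trans ((hup _).trans_eq hmajorant), by linarith [hmin 0]⟩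
  · refine ⟨(hup _).trans_eq hmajorant, ?_⟩
    have hsq : σ * F / c * F = σ * F ^ 2 / c := by ring
    rw [hsq]
    positivity

section LineObjective

variable {d n : ℕ} {φ : Euc d → EReal} {f : Fin n → Euc d → ℝ} {f' : Fin n → Euc d → Euc d}
  {i : Fin n} {x u : Euc d} (hp : ProperE φ) (hex : ∀ v, ∃ x, v ∈ subdiff φ x)
include hp hex

lemma rconj_sub_mul_le_lineObj (hu : u ∈ subdiff φ x) (s : ℝ) :
    rconj φ u - s * f i x ≤ lineObj φ f f' i x u s := by
  have := rconj_add_inner_le hp hex hu ((-s) • f' i x)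
  have hsmul : rinn ((-s) • f' i x) x = -s * rinn (f' i x) x := real_inner_smul_left _ _ _
  rw [hsmul, neg_smul, ← sub_eq_add_neg] at this
  rw [lineObj]
  linarith

lemma lineObj_le {N : Euc d → ℝ} (hN : IsANorm N) {σ : ℝ} (hσ : 0 < σ)
    (hsc : StronglyConvexWrt φ σ N) (hu : u ∈ subdiff φ x) (s : ℝ) :
    lineObj φ f f' i x u s ≤
      rconj φ u - s * f i x + s ^ 2 * dualN N (f' i x) ^ 2 / (2 * σ) := by
  have hD : ∀ y, rinn ((-s) • f' i x) y ≤ |s| * dualN N (f' i x) * N y := fun y => by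
    rw [rinn, real_inner_smul_left, mul_assoc]
    calc -s * rinn (f' i x) y ≤ |s| * |rinn (f' i x) y| := by
          rw [← abs_neg s, ← abs_mul]; exact le_abs_self _
      _ ≤ |s| * (dualN N (f' i x) * N y) := by gcongr; exact hN.abs_inner_le_dualN_mul _ _
  have := rconj_add_le hp hex hN hσ hsc hu hD
  have hsmul : rinn ((-s) • f' i x) x = -s * rinn (f' i x) x := real_inner_smul_left _ _ _
  rw [hsmul, neg_smul, ← sub_eq_add_neg, mul_pow, sq_abs] at this
  rw [lineObj]
  linarith

end LineObjective

lemma hasGradientAt_inner_add_const {d : ℕ} (a : Euc d) (b : ℝ) (x : Euc d) :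
    HasGradientAt (fun y => rinn a y + b) a x := by
  simpa [rinn] using
    (((InnerProductSpace.toDual ℝ (Euc d)) a).hasFDerivAt (x := x)).add_const b |>.hasGradientAt

/-- The linearization is nonpositive by (strict) star-convexity of a nonnegative component and
vanishes for an affine one. -/
lemma Assump2.mul_linearization_nonpos {d n : ℕ} {φ : Euc d → EReal} {f : Fin n → Euc d → ℝ}
    {f' : Fin n → Euc d → Euc d} (hA2 : Assump2 φ f f') {i : Fin n} {x z : Euc d}
    (hgrad : HasGradientAt (f i) (f' i x) x) (hx : f i x ≠ 0) (hz : f i z = 0) :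
    f i x * (f i x + rinn (f' i x) (z - x)) ≤ 0 := by
  rcases hA2 i with ⟨hnn, hstar, -⟩ | ⟨hnn, hstrict⟩ | ⟨a, b, hab⟩
  · have := hstar.2 x z fun y => hz ▸ hnn y
    exact mul_nonpos_of_nonneg_of_nonpos (hnn x) (by linarith)
  · have hxz : x ≠ z := fun h => hx (h ▸ hz)
    have := hstrict.2 x z (fun y => hz ▸ hnn y) hxz
    exact mul_nonpos_of_nonneg_of_nonpos (hnn x) (by linarith)
  · have hfi : f i = fun y => rinn a y + b := funext hab
    have hga : f' i x = a := hgrad.unique (hfi ▸ hasGradientAt_inner_add_const a b x)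
    have hsub : rinn a (z - x) = rinn a z - rinn a x := inner_sub_right a z x
    have hzero : f i x + rinn (f' i x) (z - x) = 0 := by
      rw [hga, hsub, hab x, ← hz, hab z]
      ring
    rw [hzero, mul_zero]

theorem statement10_general {d n : ℕ} (φ : Euc d → EReal) (C Dset : Set (Euc d))
    (f : Fin n → Euc d → ℝ) (f' : Fin n → Euc d → Euc d)
    (hφ : PhiAssump φ C) (hf : FAssump f f' Dset C)
    (hA2 : Assump2 φ f f')
    (σ : ℝ) (hσ : 0 < σ) (N : Euc d → ℝ) (hN : IsANorm N)
    (hsc : StronglyConvexWrt φ σ N)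
    (x u : Euc d) (hu : u ∈ subdiff φ x)
    (i : Fin n) (hf0 : f i x ≠ 0) (hf'0 : f' i x ≠ 0)
    (t : ℝ)
    (ht : (∀ s : ℝ, lineObj φ f f' i x u t ≤ lineObj φ f f' i x u s) ∨
      t = σ * f i x / (dualN N (f' i x)) ^ 2)
    (u' x' : Euc d) (hu' : u' = u - t • f' i x) (hx' : x' = gradconj φ u') :
    ∀ z ∈ solSet f C,
      breg φ u' x' z ≤
        breg φ u x z - ((σ / 2 * (f i x) ^ 2 / (dualN N (f' i x)) ^ 2 : ℝ) : EReal) := by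
  intro z hz
  have hp := hφ.proper
  have hex := exists_mem_subdiff hp hφ.lsc hφ.coercive
  obtain ⟨y, hy⟩ := hex u'
  obtain rfl : x' = y := by
    rw [hx', gradconj, (hasGradientAt_rconj hp hex hN hσ hsc hy).gradient]
  rcases eq_or_ne (φ z) ⊤ with hztop | hzfin
  · rw [breg_eq_top hp hu.1 hztop, EReal.top_sub_coe]
    exact le_top
  rw [breg_eq_of_mem_subdiff hp hy hzfin, breg_eq_of_mem_subdiff hp hu hzfin, ← EReal.coe_sub,
    EReal.coe_le_coe_iff]
  have hxD : x ∈ Dset := hf.CsubD (hφ.domC ▸ subset_closure ⟨u, hu⟩)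
  have hlin := hA2.mul_linearization_nonpos (hf.grad i x hxD) hf0 (hz.2 i)
  obtain ⟨hdesc, htF⟩ := step_le_of_quadratic_bounds hσ (pow_pos (hN.dualN_pos hf'0) 2)
    (lineObj_le hp hex hN hσ hsc hu) (rconj_sub_mul_le_lineObj hp hex hu t) ht
  have htlin : t * (f i x + rinn (f' i x) (z - x)) ≤ 0 :=
    nonpos_of_mul_nonpos_left (by linear_combination mul_nonpos_of_nonneg_of_nonpos htF hlin)
      (by positivity : 0 < f i x ^ 2)
  have hu'z : rinn u' z = rinn u z - t * rinn (f' i x) z := by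
    rw [hu', rinn, inner_sub_left, real_inner_smul_left]; rfl
  have hsub : rinn (f' i x) (z - x) = rinn (f' i x) z - rinn (f' i x) x := inner_sub_right _ _ _
  rw [lineObj, ← hu'] at hdesc
  rw [hsub] at htlin
  rw [hu'z]
  linear_combination hdesc + htlin

/-- key descent lemma: one NBK or rNBK step decreases the Bregman distance to
every solution by at least `(σ/2) f_{i_k}(x_k)²/‖∇f_{i_k}(x_k)‖_*²`. -/
theorem statement10 {d n : ℕ} (φ : Euc d → EReal) (C Dset : Set (Euc d))
    (f : Fin n → Euc d → ℝ) (f' : Fin n → Euc d → Euc d)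
    (hφ : PhiAssump φ C) (hf : FAssump f f' Dset C) (hS : (solSet f C).Nonempty)
    (hA2 : Assump2 φ f f')
    (σ : ℝ) (hσ : 0 < σ) (N : Euc d → ℝ) (hN : IsANorm N)
    (hsc : StronglyConvexWrt φ σ N)
    (x u : Euc d) (hu : u ∈ subdiff φ x)
    (i : Fin n) (hf0 : f i x ≠ 0) (hf'0 : f' i x ≠ 0)
    (t : ℝ)
    (ht : (∀ s : ℝ, lineObj φ f f' i x u t ≤ lineObj φ f f' i x u s) ∨
      t = σ * f i x / (dualN N (f' i x)) ^ 2)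
    (u' x' : Euc d) (hu' : u' = u - t • f' i x) (hx' : x' = gradconj φ u') :
    ∀ z ∈ solSet f C,
      breg φ u' x' z ≤
        breg φ u x z - ((σ / 2 * (f i x) ^ 2 / (dualN N (f' i x)) ^ 2 : ℝ) : EReal) :=
  statement10_general φ C Dset f f' hφ hf hA2 σ hσ N hN hsc x u hu i hf0 hf'0 t ht u' x' hu' hx'
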